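/- Suppose α(0) = 1 and α(k) = 1/√k for k ≥ 1, and let C > 0 satisfy |x_i(k+1) − b_i| ≤ C for all i and k. Then for every node i = 1,…,n and every integer K ≥ 1, the DLM iterates satisfy Σ_{k=0}^K α(k) |λ_i(k) − λ̄(k)| ≤ ‖λ(0)‖₁ / (1 − σ₂) + √n C (2 + ln K) / (1 − σ₂), where λ̄(k) = (1/n) Σ_{i=1}^n λ_i(k), ‖·‖₁ is the ℓ1 norm on ℝ^n, and σ₂ ∈ (0,1) is the second largest singular value of A. -/

import Mathlib

/-- The ℓ1 norm on `ℝ^n`. -/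
def l1norm {n : ℕ} (x : Fin n → ℝ) : ℝ := ∑ i, |x i|

/-- The ℓ2 (Euclidean) norm on `ℝ^n`. -/
noncomputable def l2norm {n : ℕ} (x : Fin n → ℝ) : ℝ := Real.sqrt (∑ i, (x i) ^ 2)

/-- The second largest singular value of a doubly stochastic matrix `A`, characterized
variationally as the maximal gain `‖A x‖₂` of `A` over unit ℓ2-norm vectors `x`
orthogonal to the all-ones vector (for a doubly stochastic matrix the all-ones vector is
a top singular vector with singular value `1`, so this sup is exactly `σ₂`). -/
noncomputable def sigma2 {n : ℕ} (A : Matrix (Fin n) (Fin n) ℝ) : ℝ :=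
  sSup {s : ℝ | ∃ x : Fin n → ℝ, l2norm x = 1 ∧ (∑ i, x i) = 0 ∧ s = l2norm (A.mulVec x)}

section Aux
open Finset

lemma l2norm_eq_norm {n : ℕ} (x : Fin n → ℝ) :
    l2norm x = ‖(WithLp.equiv 2 (Fin n → ℝ)).symm x‖ := by
  rw [EuclideanSpace.norm_eq]
  simp [l2norm, Real.norm_eq_abs, sq_abs]

lemma l2norm_nonneg {n : ℕ} (x : Fin n → ℝ) : 0 ≤ l2norm x := Real.sqrt_nonneg _

lemma l2norm_add_le {n : ℕ} (x y : Fin n → ℝ) :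
    l2norm (fun i => x i + y i) ≤ l2norm x + l2norm y := by
  rw [l2norm_eq_norm, l2norm_eq_norm, l2norm_eq_norm]
  have : (WithLp.equiv 2 (Fin n → ℝ)).symm (fun i => x i + y i)
      = (WithLp.equiv 2 (Fin n → ℝ)).symm x + (WithLp.equiv 2 (Fin n → ℝ)).symm y := rfl
  rw [this]
  exact norm_add_le _ _

lemma l2norm_smul {n : ℕ} (c : ℝ) (x : Fin n → ℝ) :
    l2norm (fun i => c * x i) = |c| * l2norm x := by
  rw [l2norm_eq_norm, l2norm_eq_norm]
  have : (WithLp.equiv 2 (Fin n → ℝ)).symm (fun i => c * x i)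
      = c • (WithLp.equiv 2 (Fin n → ℝ)).symm x := rfl
  rw [this, norm_smul, Real.norm_eq_abs]

lemma abs_le_l2norm {n : ℕ} (x : Fin n → ℝ) (i : Fin n) : |x i| ≤ l2norm x := by
  rw [← Real.sqrt_sq_eq_abs]
  apply Real.sqrt_le_sqrt
  exact Finset.single_le_sum (fun j _ => sq_nonneg (x j)) (mem_univ i)

lemma l2norm_le_l1norm {n : ℕ} (x : Fin n → ℝ) : l2norm x ≤ l1norm x := by
  have h1 : ∀ i ∈ (univ : Finset (Fin n)), (0:ℝ) ≤ |x i| := fun i _ => abs_nonneg _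
  have := Finset.sum_sq_le_sq_sum_of_nonneg h1
  calc l2norm x ≤ Real.sqrt ((∑ i, |x i|)^2) := by
        apply Real.sqrt_le_sqrt; simpa [sq_abs] using this
    _ = l1norm x := by
        rw [Real.sqrt_sq (Finset.sum_nonneg h1)]; rfl

lemma l2norm_le_of_abs_le {n : ℕ} (x : Fin n → ℝ) (C : ℝ) (hC : 0 ≤ C)
    (h : ∀ i, |x i| ≤ C) : l2norm x ≤ Real.sqrt n * C := by
  have h1 : ∑ i, (x i)^2 ≤ ∑ _i : Fin n, C^2 := by
    apply Finset.sum_le_sum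
    intro i _
    rw [← sq_abs]
    exact pow_le_pow_left₀ (abs_nonneg _) (h i) 2
  calc l2norm x ≤ Real.sqrt (∑ _i : Fin n, C^2) := Real.sqrt_le_sqrt h1
    _ = Real.sqrt (n * C^2) := by rw [Finset.sum_const, card_univ, Fintype.card_fin,
        nsmul_eq_mul]
    _ = Real.sqrt n * C := by
        rw [Real.sqrt_mul (Nat.cast_nonneg n), Real.sqrt_sq hC]

/-- centering decreases the sum of squares -/
lemma sum_sq_center_le {n : ℕ} (x : Fin n → ℝ) (m : ℝ) (hm : (n:ℝ) * m = ∑ i, x i) :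
    ∑ i, (x i - m)^2 ≤ ∑ i, (x i)^2 := by
  have : ∑ i, (x i - m)^2 = ∑ i, (x i)^2 - (n:ℝ)*m^2 := by
    have : ∀ i, (x i - m)^2 = (x i)^2 - 2*m*(x i) + m^2 := by intro i; ring
    simp only [this, Finset.sum_add_distrib, Finset.sum_sub_distrib, ← Finset.mul_sum,
      Finset.sum_const, card_univ, Fintype.card_fin, nsmul_eq_mul, ← hm]
    ring
  rw [this]
  nlinarith [sq_nonneg m, Nat.cast_nonneg (α := ℝ) n]

lemma l2norm_center_le {n : ℕ} (hn : 0 < n) (x : Fin n → ℝ) :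
    l2norm (fun i => x i - (∑ j, x j)/n) ≤ l2norm x := by
  apply Real.sqrt_le_sqrt
  apply sum_sq_center_le
  field_simp

/-- weighted variance identity -/
lemma weighted_var {n : ℕ} (w x : Fin n → ℝ) (hw1 : ∑ j, w j = 1) :
    ∑ j, w j * (x j - ∑ l, w l * x l)^2
      = (∑ j, w j * (x j)^2) - (∑ j, w j * x j)^2 := by
  set m := ∑ l, w l * x l with hm
  have : ∀ j, w j * (x j - m)^2 = w j * (x j)^2 - 2*m*(w j * x j) + m^2 * w j := by
    intro j; ring
  simp only [this, Finset.sum_add_distrib, Finset.sum_sub_distrib, ← Finset.mul_sum, hw1]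
  rw [← hm]
  ring

lemma weighted_jensen {n : ℕ} (w x : Fin n → ℝ) (hw0 : ∀ j, 0 ≤ w j)
    (hw1 : ∑ j, w j = 1) : (∑ j, w j * x j)^2 ≤ ∑ j, w j * (x j)^2 := by
  have h := weighted_var w x hw1
  have h0 : 0 ≤ ∑ j, w j * (x j - ∑ l, w l * x l)^2 :=
    Finset.sum_nonneg fun j _ => mul_nonneg (hw0 j) (sq_nonneg _)
  linarith

/-- double stochastic contraction on sums of squares -/
lemma mulVec_sq_sum_le {n : ℕ} (A : Matrix (Fin n) (Fin n) ℝ)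
    (hA0 : ∀ i j, 0 ≤ A i j) (hArow : ∀ i, ∑ j, A i j = 1) (hAcol : ∀ j, ∑ i, A i j = 1)
    (x : Fin n → ℝ) : ∑ i, (A.mulVec x i)^2 ≤ ∑ j, (x j)^2 := by
  have hrow : ∀ i, (A.mulVec x i)^2 ≤ ∑ j, A i j * (x j)^2 := by
    intro i
    have := weighted_jensen (fun j => A i j) x (hA0 i) (hArow i)
    simpa [Matrix.mulVec, dotProduct] using this
  calc ∑ i, (A.mulVec x i)^2 ≤ ∑ i, ∑ j, A i j * (x j)^2 :=
        Finset.sum_le_sum fun i _ => hrow i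
    _ = ∑ j, (∑ i, A i j) * (x j)^2 := by
        rw [Finset.sum_comm]; simp [Finset.sum_mul]
    _ = ∑ j, (x j)^2 := by simp [hAcol]

section sig
variable {n : ℕ} (A : Matrix (Fin n) (Fin n) ℝ)

lemma sigma2_set_le_one (hA0 : ∀ i j, 0 ≤ A i j) (hArow : ∀ i, ∑ j, A i j = 1)
    (hAcol : ∀ j, ∑ i, A i j = 1) :
    ∀ s ∈ {s : ℝ | ∃ x : Fin n → ℝ, l2norm x = 1 ∧ (∑ i, x i) = 0 ∧
      s = l2norm (A.mulVec x)}, s ≤ 1 := by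
  rintro s ⟨x, hx1, -, rfl⟩
  have h := mulVec_sq_sum_le A hA0 hArow hAcol x
  have : l2norm (A.mulVec x) ≤ l2norm x := Real.sqrt_le_sqrt h
  rw [hx1] at this; exact this

lemma sigma2_bddAbove (hA0 : ∀ i j, 0 ≤ A i j) (hArow : ∀ i, ∑ j, A i j = 1)
    (hAcol : ∀ j, ∑ i, A i j = 1) :
    BddAbove {s : ℝ | ∃ x : Fin n → ℝ, l2norm x = 1 ∧ (∑ i, x i) = 0 ∧
      s = l2norm (A.mulVec x)} :=
  ⟨1, sigma2_set_le_one A hA0 hArow hAcol⟩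

lemma sigma2_nonneg : 0 ≤ sigma2 A := by
  apply Real.sSup_nonneg
  rintro s ⟨x, -, -, rfl⟩
  exact l2norm_nonneg _

lemma sigma2_le_one (hA0 : ∀ i j, 0 ≤ A i j) (hArow : ∀ i, ∑ j, A i j = 1)
    (hAcol : ∀ j, ∑ i, A i j = 1) : sigma2 A ≤ 1 :=
  Real.sSup_le (sigma2_set_le_one A hA0 hArow hAcol) one_pos.le

/-- key contraction property -/
lemma sigma2_spectral (hA0 : ∀ i j, 0 ≤ A i j) (hArow : ∀ i, ∑ j, A i j = 1)
    (hAcol : ∀ j, ∑ i, A i j = 1) (y : Fin n → ℝ) (hy : ∑ i, y i = 0) :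
    l2norm (A.mulVec y) ≤ sigma2 A * l2norm y := by
  rcases eq_or_ne (l2norm y) 0 with h0 | h0
  · have hy0 : y = 0 := by
      funext i
      have h1 := abs_le_l2norm y i
      rw [h0] at h1
      have := abs_nonpos_iff.mp h1
      simpa using this
    subst hy0
    have : l2norm (0 : Fin n → ℝ) = 0 := by simp [l2norm]
    rw [Matrix.mulVec_zero]
    simp [this, h0]
  · have ht : 0 < l2norm y := lt_of_le_of_ne (l2norm_nonneg y) (Ne.symm h0)
    set t := l2norm y with htdef
    set u : Fin n → ℝ := fun i => (1/t) * y i with hu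
    have hu1 : l2norm u = 1 := by
      rw [hu, l2norm_smul, abs_of_pos (by positivity : (0:ℝ) < 1/t)]
      field_simp
      exact htdef.symm
    have hus : ∑ i, u i = 0 := by
      simp only [hu, ← Finset.mul_sum, hy, mul_zero]
    have hmem : l2norm (A.mulVec u) ∈ {s : ℝ | ∃ x : Fin n → ℝ, l2norm x = 1 ∧
        (∑ i, x i) = 0 ∧ s = l2norm (A.mulVec x)} := ⟨u, hu1, hus, rfl⟩
    have hle : l2norm (A.mulVec u) ≤ sigma2 A :=
      le_csSup (sigma2_bddAbove A hA0 hArow hAcol) hmem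
    have hAu : A.mulVec u = fun i => (1/t) * A.mulVec y i := by
      funext i
      simp only [hu, Matrix.mulVec, dotProduct]
      rw [Finset.mul_sum]
      congr 1; funext j; ring
    rw [hAu, l2norm_smul, abs_of_pos (by positivity : (0:ℝ) < 1/t)] at hle
    calc l2norm (A.mulVec y) = t * ((1/t) * l2norm (A.mulVec y)) := by field_simp
      _ ≤ t * sigma2 A := by
          apply mul_le_mul_of_nonneg_left hle ht.le
      _ = sigma2 A * l2norm y := by rw [mul_comm]

end sig

lemma graph_const {n : ℕ} (G : SimpleGraph (Fin n)) (hGconn : G.Connected)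
    (x : Fin n → ℝ) (hadj : ∀ i j, G.Adj i j → x i = x j) : ∀ i j, x i = x j := by
  intro i j
  obtain ⟨p⟩ := hGconn i j
  induction p with
  | nil => rfl
  | cons h q ih => exact (hadj _ _ h).trans ih

theorem sigma2_lt_one {n : ℕ} (A : Matrix (Fin n) (Fin n) ℝ)
    (hA0 : ∀ i j, 0 ≤ A i j) (hArow : ∀ i, ∑ j, A i j = 1) (hAcol : ∀ j, ∑ i, A i j = 1)
    (hAdiag : ∀ i, 0 < A i i) (G : SimpleGraph (Fin n))
    (hGadj : ∀ i j, G.Adj i j ↔ (i ≠ j ∧ 0 < A i j)) (hGconn : G.Connected) :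
    sigma2 A < 1 := by
  set S := {s : ℝ | ∃ x : Fin n → ℝ, l2norm x = 1 ∧ (∑ i, x i) = 0 ∧
    s = l2norm (A.mulVec x)} with hS
  set K := {x : Fin n → ℝ | l2norm x = 1 ∧ (∑ i, x i) = 0} with hK
  rcases Set.eq_empty_or_nonempty K with hKe | hKne
  · have hSe : S = ∅ := by
      rw [Set.eq_empty_iff_forall_notMem]
      rintro s ⟨x, hx1, hx2, -⟩
      exact Set.eq_empty_iff_forall_notMem.mp hKe x ⟨hx1, hx2⟩
    rw [sigma2, ← hS, hSe, Real.sSup_empty]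
    norm_num
  · -- K is compact
    have hl2cont : Continuous (l2norm (n := n)) := by
      apply Real.continuous_sqrt.comp
      exact continuous_finset_sum _ fun i _ => (continuous_apply i).pow 2
    have hKclosed : IsClosed K := by
      have h1 : IsClosed {x : Fin n → ℝ | l2norm x = 1} :=
        isClosed_eq hl2cont continuous_const
      have h2 : IsClosed {x : Fin n → ℝ | (∑ i, x i) = 0} :=
        isClosed_eq (continuous_finset_sum _ fun i _ => continuous_apply i) continuous_const
      exact h1.inter h2
    have hKsub : K ⊆ Metric.closedBall (0 : Fin n → ℝ) 1 := by
      rintro x ⟨hx1, -⟩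
      rw [Metric.mem_closedBall, dist_zero_right]
      rw [pi_norm_le_iff_of_nonneg zero_le_one]
      intro i
      rw [Real.norm_eq_abs]
      calc |x i| ≤ l2norm x := abs_le_l2norm x i
        _ = 1 := hx1
    have hKcpt : IsCompact K :=
      (isCompact_closedBall (0 : Fin n → ℝ) 1).of_isClosed_subset hKclosed hKsub
    have hScpt : IsCompact S := by
      have : S = (fun x => l2norm (A.mulVec x)) '' K := by
        ext s
        constructor
        · rintro ⟨x, h1, h2, rfl⟩; exact ⟨x, ⟨h1, h2⟩, rfl⟩
        · rintro ⟨x, ⟨h1, h2⟩, rfl⟩; exact ⟨x, h1, h2, rfl⟩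
      rw [this]
      apply hKcpt.image
      refine hl2cont.comp (continuous_pi fun i => ?_)
      have : (fun a : Fin n → ℝ => A.mulVec a i) = fun a => ∑ j, A i j * a j := by
        funext a; simp [Matrix.mulVec, dotProduct]
      rw [this]
      exact continuous_finset_sum _ fun j _ => continuous_const.mul (continuous_apply j)
    have hSne : S.Nonempty := by
      obtain ⟨x, hx1, hx2⟩ := hKne
      exact ⟨l2norm (A.mulVec x), x, hx1, hx2, rfl⟩
    have hmem : sSup S ∈ S := hScpt.sSup_mem hSne
    obtain ⟨x, hx1, hxs, hxe⟩ := hmem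
    by_contra hcon
    push_neg at hcon
    have heq : sigma2 A = 1 :=
      le_antisymm (Real.sSup_le (sigma2_set_le_one A hA0 hArow hAcol) one_pos.le) hcon
    -- so l2norm (A.mulVec x) = 1
    have hAx1 : l2norm (A.mulVec x) = 1 := by rw [← hxe, ← heq]; rfl
    have hsum1 : ∑ i, (A.mulVec x i)^2 = 1 := by
      rw [l2norm] at hAx1
      exact Real.sqrt_eq_one.mp hAx1
    have hx2sum : ∑ i, (x i)^2 = 1 := by
      rw [l2norm] at hx1
      exact Real.sqrt_eq_one.mp hx1
    -- pointwise equality in Jensen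
    have hrsum : ∑ i, (∑ j, A i j * (x j)^2) = 1 := by
      rw [Finset.sum_comm]
      calc ∑ j, ∑ i, A i j * (x j)^2 = ∑ j, (∑ i, A i j) * (x j)^2 := by
            simp [Finset.sum_mul]
        _ = 1 := by simp [hAcol, hx2sum]
    have hle : ∀ i ∈ (univ : Finset (Fin n)), (A.mulVec x i)^2 ≤ ∑ j, A i j * (x j)^2 := by
      intro i _
      have := weighted_jensen (fun j => A i j) x (hA0 i) (hArow i)
      simpa [Matrix.mulVec, dotProduct] using this
    have hsums : ∑ i, (A.mulVec x i)^2 = ∑ i, ∑ j, A i j * (x j)^2 := by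
      rw [hsum1, hrsum]
    have hpt : ∀ i ∈ (univ : Finset (Fin n)),
        (A.mulVec x i)^2 = ∑ j, A i j * (x j)^2 :=
      (Finset.sum_eq_sum_iff_of_le hle).mp hsums
    -- variance zero for each row
    have hvar : ∀ i, ∀ j, A i j * (x j - A.mulVec x i)^2 = 0 := by
      intro i
      have hmv : A.mulVec x i = ∑ l, A i l * x l := by
        simp [Matrix.mulVec, dotProduct]
      have hv := weighted_var (fun j => A i j) x (hArow i)
      have hz : ∑ j, A i j * (x j - A.mulVec x i)^2 = 0 := by
        rw [hmv, hv]
        have := hpt i (mem_univ i)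
        rw [hmv] at this
        linarith
      intro j
      have := (Finset.sum_eq_zero_iff_of_nonneg
        (fun j _ => mul_nonneg (hA0 i j) (sq_nonneg _))).mp hz j (mem_univ j)
      exact this
    have hxm : ∀ i j, 0 < A i j → x j = A.mulVec x i := by
      intro i j hpos
      have := hvar i j
      have h2 : (x j - A.mulVec x i)^2 = 0 := by
        rcases mul_eq_zero.mp this with h | h
        · exact absurd h (ne_of_gt hpos)
        · exact h
      have := pow_eq_zero_iff (n := 2) (by norm_num) |>.mp h2
      linarith
    have hadj : ∀ i j, G.Adj i j → x i = x j := by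
      intro i j hij
      obtain ⟨-, hpos⟩ := (hGadj i j).mp hij
      rw [hxm i j hpos, ← hxm i i (hAdiag i)]
    have hconst := graph_const G hGconn x hadj
    -- x constant with zero sum and n > 0 forces x = 0
    have hn : 0 < n := by
      rcases Nat.eq_zero_or_pos n with h0 | h
      · exfalso
        subst h0
        rw [l2norm] at hx1
        simp at hx1
      · exact h
    obtain ⟨i0⟩ : Nonempty (Fin n) := ⟨⟨0, hn⟩⟩
    have hxall : ∀ j, x j = x i0 := fun j => hconst j i0
    have hzero : x i0 = 0 := by
      have : ∑ j, x j = (n : ℝ) * x i0 := by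
        rw [Finset.sum_congr rfl (fun j _ => hxall j)]
        simp [Finset.sum_const, mul_comm]
      rw [this] at hxs
      have hne : (n : ℝ) ≠ 0 := Nat.cast_ne_zero.mpr hn.ne'
      rcases mul_eq_zero.mp hxs with h | h
      · exact absurd h hne
      · exact h
    have : l2norm x = 0 := by
      rw [l2norm]
      have : ∀ j, x j = 0 := fun j => (hxall j).trans hzero
      simp [this]
    rw [hx1] at this
    norm_num at this

lemma geom_sum_le_inv {σ : ℝ} (h0 : 0 ≤ σ) (h1 : σ < 1) (N : ℕ) :
    ∑ t ∈ range N, σ^t ≤ 1/(1-σ) := by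
  have h1σ : 0 < 1 - σ := by linarith
  rw [geom_sum_eq (by intro h; rw [h] at h1; linarith : σ ≠ 1)]
  have he : (σ^N - 1)/(σ - 1) = (1 - σ^N)/(1 - σ) := by
    rw [← neg_div_neg_eq]; ring_nf
  rw [he]
  gcongr
  nlinarith [pow_nonneg h0 N]

lemma harmonic_le_log (K : ℕ) (hK : 1 ≤ K) :
    ∑ t ∈ range K, (1:ℝ)/(t+1) ≤ 1 + Real.log K := by
  induction K, hK using Nat.le_induction with
  | base => norm_num
  | succ K hK ih =>
    rw [Finset.sum_range_succ]
    have hKpos : (0:ℝ) < K := by exact_mod_cast hK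
    have hstep : (1:ℝ)/((K:ℝ)+1) ≤ Real.log ((K:ℝ)+1) - Real.log K := by
      have h1 : Real.log ((K:ℝ)/((K:ℝ)+1)) ≤ (K:ℝ)/((K:ℝ)+1) - 1 :=
        Real.log_le_sub_one_of_pos (by positivity)
      rw [Real.log_div (by positivity) (by positivity)] at h1
      have h2 : (K:ℝ)/((K:ℝ)+1) - 1 = -(1/((K:ℝ)+1)) := by field_simp; ring
      rw [h2] at h1
      linarith
    have hcast : ((K+1 : ℕ) : ℝ) = (K:ℝ) + 1 := by push_cast; ring
    rw [hcast]
    linarith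

end Aux

open Finset in
/-- With `α 0 = 1`, `α k = 1/√k` for `k ≥ 1`, and `C > 0` bounding
`|xᵢ(k+1) − bᵢ|`, the DLM iterates satisfy, for all `i` and all integers `K ≥ 1`,
`Σ_{k=0}^K α(k)|λᵢ(k) − λ̄(k)| ≤ ‖λ(0)‖₁/(1−σ₂) + √n C (2 + ln K)/(1−σ₂)`. -/
theorem dlm_weighted_consensus_bound
    {n : ℕ} (hn : 0 < n)
    (f : Fin n → ℝ → ℝ) (X : Fin n → Set ℝ) (b : Fin n → ℝ)
    (A : Matrix (Fin n) (Fin n) ℝ) (α : ℕ → ℝ)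
    (lam x v : ℕ → Fin n → ℝ)
    -- each `f i` is proper, closed and convex (finite-valued convex, hence continuous)
    (hf : ∀ i, ConvexOn ℝ Set.univ (f i))
    (hfc : ∀ i, Continuous (f i))
    -- each `X i` is a nonempty convex compact subset of ℝ
    (hXne : ∀ i, (X i).Nonempty)
    (hXcvx : ∀ i, Convex ℝ (X i))
    (hXcpt : ∀ i, IsCompact (X i))
    -- `A` is doubly stochastic with positive diagonal
    (hA0 : ∀ i j, 0 ≤ A i j)
    (hArow : ∀ i, ∑ j, A i j = 1)
    (hAcol : ∀ j, ∑ i, A i j = 1)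
    (hAdiag : ∀ i, 0 < A i i)
    -- the off-diagonal positivity pattern of `A` is the edge set of a connected
    -- undirected graph `G`
    (G : SimpleGraph (Fin n))
    (hGadj : ∀ i j, G.Adj i j ↔ (i ≠ j ∧ 0 < A i j))
    (hGconn : G.Connected)
    -- positive step sizes
    (hαpos : ∀ k, 0 < α k)
    -- the DLM iteration
    (hv : ∀ (k : ℕ) (i : Fin n), v (k + 1) i = ∑ j, A i j * lam k j)
    (hxmem : ∀ (k : ℕ) (i : Fin n), x (k + 1) i ∈ X i)
    (hxmin : ∀ (k : ℕ) (i : Fin n), ∀ y ∈ X i,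
      f i (x (k + 1) i) + v (k + 1) i * (x (k + 1) i - b i) ≤
        f i y + v (k + 1) i * (y - b i))
    (hlam : ∀ (k : ℕ) (i : Fin n), lam (k + 1) i = v (k + 1) i - α k * (x (k + 1) i - b i))
    -- step sizes: `α 0 = 1` and `α k = 1/√k` for `k ≥ 1`
    (hα1 : α 0 = 1)
    (hαsqrt : ∀ k : ℕ, 1 ≤ k → α k = 1 / Real.sqrt k)
    -- `C > 0` bounds `|xᵢ(k+1) − bᵢ|` for all `i` and `k`
    (C : ℝ) (hC : 0 < C)
    (hCb : ∀ (k : ℕ) (i : Fin n), |x (k + 1) i - b i| ≤ C) :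
    ∀ (i : Fin n) (K : ℕ), 1 ≤ K →
      ∑ k ∈ Finset.range (K + 1), α k * |lam k i - (∑ j, lam k j) / n| ≤
        l1norm (lam 0) / (1 - sigma2 A) +
          Real.sqrt n * C * (2 + Real.log K) / (1 - sigma2 A) := by
  intro i K hK
  have hσ0 : 0 ≤ sigma2 A := sigma2_nonneg A
  have hσ1 : sigma2 A < 1 := sigma2_lt_one A hA0 hArow hAcol hAdiag G hGadj hGconn
  set σ := sigma2 A with hσdef
  have h1σ : 0 < 1 - σ := by linarith
  have hnR : (0:ℝ) < n := by exact_mod_cast hn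
  -- step size properties
  have hα_le1 : ∀ k, α k ≤ 1 := by
    intro k
    rcases Nat.eq_zero_or_pos k with rfl | hk
    · rw [hα1]
    · rw [hαsqrt k hk]
      have h1 : (1:ℝ) ≤ Real.sqrt k := by
        rw [show (1:ℝ) = Real.sqrt 1 by simp]
        exact Real.sqrt_le_sqrt (by exact_mod_cast hk)
      rw [div_le_one (by linarith)]
      exact h1
  have hα_anti : ∀ s k : ℕ, s ≤ k → α k ≤ α s := by
    intro s k hsk
    rcases Nat.eq_zero_or_pos s with rfl | hs
    · rw [hα1]; exact hα_le1 k
    · have hk : 1 ≤ k := le_trans hs hsk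
      rw [hαsqrt s hs, hαsqrt k hk]
      have hsp : (0:ℝ) < Real.sqrt s := Real.sqrt_pos.mpr (by exact_mod_cast hs)
      apply one_div_le_one_div_of_le hsp
      exact Real.sqrt_le_sqrt (by exact_mod_cast hsk)
  have hα2 : ∀ s : ℕ, 1 ≤ s → (α s)^2 = 1/(s:ℝ) := by
    intro s hs
    rw [hαsqrt s hs, div_pow, one_pow, Real.sq_sqrt (by positivity)]
  -- the disagreement vector
  set d : ℕ → Fin n → ℝ := fun k j => lam k j - (∑ l, lam k l)/n with hd_def
  set e : ℕ → Fin n → ℝ := fun k j => x (k+1) j - b j with he_def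
  set M : ℝ := Real.sqrt n * C with hM_def
  have hM0 : 0 ≤ M := mul_nonneg (Real.sqrt_nonneg _) hC.le
  have hd_sum : ∀ k, ∑ j, d k j = 0 := by
    intro k
    rw [hd_def]
    rw [Finset.sum_sub_distrib, Finset.sum_const, card_univ, Fintype.card_fin, nsmul_eq_mul]
    field_simp
    ring
  have hlam' : ∀ k j, lam (k+1) j = (∑ l, A j l * lam k l) - α k * e k j := by
    intro k j
    rw [hlam k j, hv k j, he_def]
  have hsum_lam : ∀ k, ∑ j, lam (k+1) j = ∑ j, lam k j - α k * ∑ j, e k j := by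
    intro k
    simp only [hlam']
    rw [Finset.sum_sub_distrib, Finset.sum_comm, ← Finset.mul_sum]
    congr 1
    apply Finset.sum_congr rfl
    intro l _
    rw [← Finset.sum_mul, hAcol l, one_mul]
  have hd_rec : ∀ k, d (k+1) = fun j =>
      A.mulVec (d k) j + (-(α k)) * (e k j - (∑ l, e k l)/n) := by
    intro k
    funext j
    have hmv : A.mulVec (d k) j = (∑ l, A j l * lam k l) - (∑ l, lam k l)/n := by
      simp only [Matrix.mulVec, dotProduct, hd_def]
      have : ∀ l, A j l * (lam k l - (∑ m, lam k m)/n)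
          = A j l * lam k l - ((∑ m, lam k m)/n) * A j l := by intro l; ring
      simp only [this]
      rw [Finset.sum_sub_distrib, ← Finset.mul_sum, hArow j, mul_one]
    have hLHS : d (k+1) j = (∑ l, A j l * lam k l) - α k * e k j
        - (∑ l, lam k l - α k * ∑ l, e k l)/n := by
      rw [hd_def]
      simp only
      rw [hlam' k j, hsum_lam k]
    rw [hLHS, hmv]
    ring
  have hcontract : ∀ k, l2norm (d (k+1)) ≤ σ * l2norm (d k) + α k * M := by
    intro k
    rw [hd_rec k]
    have h1 : l2norm (fun j => A.mulVec (d k) j + (-(α k)) * (e k j - (∑ l, e k l)/n))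
        ≤ l2norm (A.mulVec (d k)) + l2norm (fun j => (-(α k)) * (e k j - (∑ l, e k l)/n)) :=
      l2norm_add_le _ _
    have h2 : l2norm (A.mulVec (d k)) ≤ σ * l2norm (d k) :=
      sigma2_spectral A hA0 hArow hAcol (d k) (hd_sum k)
    have h3 : l2norm (fun j => (-(α k)) * (e k j - (∑ l, e k l)/n))
        = α k * l2norm (fun j => e k j - (∑ l, e k l)/n) := by
      rw [l2norm_smul, abs_neg, abs_of_pos (hαpos k)]
    have h4 : l2norm (fun j => e k j - (∑ l, e k l)/n) ≤ l2norm (e k) :=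
      l2norm_center_le hn (e k)
    have h5 : l2norm (e k) ≤ M := by
      rw [hM_def]
      exact l2norm_le_of_abs_le (e k) C hC.le (fun j => hCb k j)
    calc l2norm (fun j => A.mulVec (d k) j + (-(α k)) * (e k j - (∑ l, e k l)/n))
        ≤ l2norm (A.mulVec (d k)) + l2norm (fun j => (-(α k)) * (e k j - (∑ l, e k l)/n)) := h1
      _ ≤ σ * l2norm (d k) + α k * M := by
          apply add_le_add h2
          rw [h3]
          exact mul_le_mul_of_nonneg_left (le_trans h4 h5) (hαpos k).le
  set T0 : ℝ := l2norm (d 0) with hT0_def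
  have hT00 : 0 ≤ T0 := l2norm_nonneg _
  have hclosed : ∀ k, l2norm (d k) ≤ σ^k * T0 + M * ∑ s ∈ range k, σ^(k-1-s) * α s := by
    intro k
    induction k with
    | zero => simp [hT0_def]
    | succ k ih =>
      have hstep : σ * ∑ s ∈ range k, σ^(k-1-s) * α s = ∑ s ∈ range k, σ^(k-s) * α s := by
        rw [Finset.mul_sum]
        apply Finset.sum_congr rfl
        intro s hs
        rw [Finset.mem_range] at hs
        rw [← mul_assoc, ← pow_succ']
        congr 2
        omega
      calc l2norm (d (k+1)) ≤ σ * l2norm (d k) + α k * M := hcontract k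
        _ ≤ σ * (σ^k * T0 + M * ∑ s ∈ range k, σ^(k-1-s) * α s) + α k * M := by
            apply add_le_add_left
            exact mul_le_mul_of_nonneg_left ih hσ0
        _ = σ^(k+1) * T0 + M * (σ * ∑ s ∈ range k, σ^(k-1-s) * α s + α k) := by ring
        _ = σ^(k+1) * T0 + M * ∑ s ∈ range (k+1), σ^(k+1-1-s) * α s := by
            rw [hstep, Finset.sum_range_succ]
            simp only [Nat.add_sub_cancel]
            rw [Nat.sub_self, pow_zero, one_mul]
  -- rewrite the goal in terms of d
  have hdg : ∀ k, lam k i - (∑ j, lam k j)/(n:ℝ) = d k i := fun k => rfl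
  simp only [hdg]
  -- termwise bound
  have hterm : ∀ k, α k * |d k i| ≤ α k * (σ^k * T0 + M * ∑ s ∈ range k, σ^(k-1-s) * α s) := by
    intro k
    apply mul_le_mul_of_nonneg_left _ (hαpos k).le
    exact le_trans (abs_le_l2norm (d k) i) (hclosed k)
  have hstep1 : ∑ k ∈ range (K+1), α k * |d k i|
      ≤ ∑ k ∈ range (K+1), (α k * (σ^k * T0) + α k * (M * ∑ s ∈ range k, σ^(k-1-s) * α s)) := by
    apply Finset.sum_le_sum
    intro k _
    calc α k * |d k i| ≤ α k * (σ^k * T0 + M * ∑ s ∈ range k, σ^(k-1-s) * α s) := hterm k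
      _ = α k * (σ^k * T0) + α k * (M * ∑ s ∈ range k, σ^(k-1-s) * α s) := by ring
  rw [Finset.sum_add_distrib] at hstep1
  -- first piece
  have hpiece1 : ∑ k ∈ range (K+1), α k * (σ^k * T0) ≤ T0 * (1/(1-σ)) := by
    calc ∑ k ∈ range (K+1), α k * (σ^k * T0) ≤ ∑ k ∈ range (K+1), σ^k * T0 := by
          apply Finset.sum_le_sum
          intro k _
          have hp : 0 ≤ σ^k * T0 := mul_nonneg (pow_nonneg hσ0 k) hT00
          nlinarith [hα_le1 k, (hαpos k).le]
      _ = T0 * ∑ k ∈ range (K+1), σ^k := by rw [Finset.mul_sum]; apply Finset.sum_congr rfl; intros; ring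
      _ ≤ T0 * (1/(1-σ)) := mul_le_mul_of_nonneg_left (geom_sum_le_inv hσ0 hσ1 _) hT00
  -- second piece
  have hpiece2 : ∑ k ∈ range (K+1), α k * (M * ∑ s ∈ range k, σ^(k-1-s) * α s)
      ≤ M * ((2 + Real.log K) * (1/(1-σ))) := by
    have hinner : ∀ k, α k * (M * ∑ s ∈ range k, σ^(k-1-s) * α s)
        = M * ∑ s ∈ range k, α k * (σ^(k-1-s) * α s) := by
      intro k
      rw [show α k * (M * ∑ s ∈ range k, σ^(k-1-s) * α s)
          = M * (α k * ∑ s ∈ range k, σ^(k-1-s) * α s) from by ring, Finset.mul_sum]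
    simp only [hinner]
    rw [← Finset.mul_sum]
    apply mul_le_mul_of_nonneg_left _ hM0
    have hsq : ∑ k ∈ range (K+1), ∑ s ∈ range k, α k * (σ^(k-1-s) * α s)
        ≤ ∑ k ∈ range (K+1), ∑ s ∈ range k, σ^(k-1-s) * (α s)^2 := by
      apply Finset.sum_le_sum
      intro k _
      apply Finset.sum_le_sum
      intro s hs
      rw [Finset.mem_range] at hs
      have h1 : α k ≤ α s := hα_anti s k hs.le
      have h2 : 0 ≤ σ^(k-1-s) := pow_nonneg hσ0 _
      have h3 : 0 < α s := hαpos s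
      nlinarith [mul_nonneg (mul_nonneg (sub_nonneg.mpr h1) h2) h3.le]
    apply hsq.trans
    have hswap := Finset.sum_Ico_Ico_comm' 0 (K+1) (fun s k => σ^(k-1-s) * (α s)^2)
    simp only [← Finset.range_eq_Ico] at hswap
    rw [← hswap]
    have hin : ∀ s ∈ range (K+1), ∑ k ∈ Finset.Ico (s+1) (K+1), σ^(k-1-s) * (α s)^2
        ≤ (α s)^2 * (1/(1-σ)) := by
      intro s _
      rw [Finset.sum_Ico_eq_sum_range]
      have : ∀ t, σ^(s+1+t-1-s) * (α s)^2 = σ^t * (α s)^2 := by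
        intro t; congr 2; omega
      simp only [this]
      rw [← Finset.sum_mul]
      rw [mul_comm]
      apply mul_le_mul_of_nonneg_left (geom_sum_le_inv hσ0 hσ1 _) (sq_nonneg _)
    calc ∑ s ∈ range (K+1), ∑ k ∈ Finset.Ico (s+1) (K+1), σ^(k-1-s) * (α s)^2
        ≤ ∑ s ∈ range (K+1), (α s)^2 * (1/(1-σ)) := Finset.sum_le_sum hin
      _ = (∑ s ∈ range (K+1), (α s)^2) * (1/(1-σ)) := by rw [Finset.sum_mul]
      _ ≤ (2 + Real.log K) * (1/(1-σ)) := by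
          apply mul_le_mul_of_nonneg_right _ (by positivity)
          rw [Finset.sum_range_succ']
          have h1 : ∀ t, t ∈ range K → (α (t+1))^2 = 1/((t:ℝ)+1) := by
            intro t _
            rw [hα2 (t+1) (by omega)]
            push_cast
            ring_nf
          rw [Finset.sum_congr rfl h1, hα1, one_pow]
          have := harmonic_le_log K hK
          linarith
  -- combine
  have hT0le : T0 ≤ l1norm (lam 0) := by
    rw [hT0_def]
    calc l2norm (d 0) ≤ l2norm (lam 0) := l2norm_center_le hn (lam 0)
      _ ≤ l1norm (lam 0) := l2norm_le_l1norm (lam 0)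
  have hlogK : 0 ≤ Real.log K := Real.log_nonneg (by exact_mod_cast hK)
  calc ∑ k ∈ range (K+1), α k * |d k i|
      ≤ T0 * (1/(1-σ)) + M * ((2 + Real.log K) * (1/(1-σ))) :=
        le_trans hstep1 (add_le_add hpiece1 hpiece2)
    _ ≤ l1norm (lam 0) * (1/(1-σ)) + M * ((2 + Real.log K) * (1/(1-σ))) := by
        apply add_le_add_left
        apply mul_le_mul_of_nonneg_right hT0le (by positivity)
    _ = l1norm (lam 0) / (1-σ) + Real.sqrt n * C * (2 + Real.log K) / (1-σ) := by
        rw [hM_def]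
        field_simp
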